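/- arXiv:1303.2874 — 3 statements merged into one kernel-verified Lean document; each statement's English description precedes it below -/
import Mathlib

section
/- Let $(Y_1, Y_2)$ be a discrete random vector with joint p.m.f. $p_{\theta_0}(y_1,y_2)>0$ under the true parameter $\theta_0$, marginal $p_{1,\theta_0}(y_1)>0$, and let $\lambda(\cdot)$ be a positive function of $y_1$. Then for any parameter $\theta$, $P_{\theta_0}\{p_{\theta_0}(Y_1,Y_2) \le \lambda(Y_1)\, p_\theta(Y_1,Y_2) \mid Y_1 = y_1\} \le \lambda(y_1)\, p_{1,\theta}(y_1)/p_{1,\theta_0}(y_1)$. -/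
section

variable {ι α : Type*} [AddCommMonoid α] [PartialOrder α] [IsOrderedAddMonoid α]
  [TopologicalSpace α] [OrderClosedTopology α]

/-- Unlike `Summable.tsum_le_tsum`, `f` need not be summable: otherwise its sum is the junk
value `0`. -/
theorem tsum_le_tsum_of_nonneg_of_summable {f g : ι → α} (hfg : ∀ i, f i ≤ g i)
    (hg0 : ∀ i, 0 ≤ g i) (hg : Summable g) : ∑' i, f i ≤ ∑' i, g i := by
  by_cases hf : Summable f
  · exact hf.tsum_le_tsum hfg hg
  · rw [tsum_eq_zero_of_not_summable hf]
    exact tsum_nonneg hg0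

theorem tsum_ite_le_tsum_of_imp {P : ι → Prop} [DecidablePred P] {f g : ι → α}
    (hfg : ∀ i, P i → f i ≤ g i) (hg0 : ∀ i, 0 ≤ g i) (hg : Summable g) :
    ∑' i, (if P i then f i else 0) ≤ ∑' i, g i :=
  tsum_le_tsum_of_nonneg_of_summable
    (fun i ↦ by split_ifs with hP; exacts [hfg i hP, hg0 i]) hg0 hg

end

theorem generalized_subset_inequality_general {α β : Type*}
    (pθ0 pθ : α → β → ℝ) (lam : α → ℝ)
    (hθnn : ∀ y1 y2, 0 ≤ pθ y1 y2)
    (hlam : ∀ y1, 0 < lam y1)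
    (hθsum : ∀ y1, Summable (pθ y1))
    (y1 : α) (hy1 : 0 < ∑' y2, pθ0 y1 y2) :
    (∑' y2, if pθ0 y1 y2 ≤ lam y1 * pθ y1 y2
        then pθ0 y1 y2 / (∑' y2', pθ0 y1 y2') else 0)
      ≤ lam y1 * ((∑' y2, pθ y1 y2) / (∑' y2, pθ0 y1 y2)) := by
  set S := ∑' y2, pθ0 y1 y2
  calc (∑' y2, if pθ0 y1 y2 ≤ lam y1 * pθ y1 y2 then pθ0 y1 y2 / S else 0)
      ≤ ∑' y2, lam y1 * pθ y1 y2 / S :=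
        tsum_ite_le_tsum_of_imp (fun _ h ↦ div_le_div_of_nonneg_right h hy1.le)
          (fun y2 ↦ div_nonneg (mul_nonneg (hlam y1).le (hθnn y1 y2)) hy1.le)
          (((hθsum y1).mul_left (lam y1)).div_const S)
    _ = lam y1 * ((∑' y2, pθ y1 y2) / S) := by
        rw [tsum_div_const, tsum_mul_left, mul_div_assoc]

/-- Generalized subset inequality: for any positive function `lam` of the subset
data `y₁`, the conditional probability, given `Y₁ = y₁`, that
`p_{θ₀}(Y₁,Y₂) ≤ lam(Y₁) p_θ(Y₁,Y₂)` is at most `lam(y₁) p_{1,θ}(y₁)/p_{1,θ₀}(y₁)`. -/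
theorem generalized_subset_inequality {α β : Type*} [Countable α] [Countable β]
    (pθ0 pθ : α → β → ℝ) (lam : α → ℝ)
    (hθ0pos : ∀ y1 y2, 0 < pθ0 y1 y2) (hθnn : ∀ y1 y2, 0 ≤ pθ y1 y2)
    (hlam : ∀ y1, 0 < lam y1)
    (hθ0sum : ∀ y1, Summable (pθ0 y1)) (hθsum : ∀ y1, Summable (pθ y1))
    (y1 : α) (hy1 : 0 < ∑' y2, pθ0 y1 y2) :
    (∑' y2, if pθ0 y1 y2 ≤ lam y1 * pθ y1 y2
        then pθ0 y1 y2 / (∑' y2', pθ0 y1 y2') else 0)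
      ≤ lam y1 * ((∑' y2, pθ y1 y2) / (∑' y2, pθ0 y1 y2)) :=
  generalized_subset_inequality_general pθ0 pθ lam hθnn hlam hθsum y1 hy1
end

section
/- Let $(X,Y)$ be bivariate normal with mean zero, $\mathrm{Var}(X)=\mathrm{Var}(Y)=\psi_0^2>0$ and correlation $\gamma \in (-1,1)$, and fix $\mu_0 \in \mathbb{R}$. Define $p_\gamma(1,1) = E\big[\frac{e^{\mu_0+X}}{1+e^{\mu_0+X}} \cdot \frac{e^{\mu_0+Y}}{1+e^{\mu_0+Y}}\big]$. Then $p_\gamma(1,1) = \int_0^\infty \int_0^\infty P_\gamma\{X \ge \mathrm{logit}(s)-\mu_0,\ Y \ge \mathrm{logit}(t)-\mu_0\}\,ds\,dt$ restricted to $s,t \in (0,1)$ (i.e., with the integrand vanishing for $s$ or $t \ge 1$), and $p_\gamma(1,1)$ is strictly increasing in $\gamma$. -/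
/-!
Since `h x = ∫₀¹ 1{logit s ≤ x} ds`, writing both logistic factors this way and applying
Tonelli gives the orthant representation.

For monotonicity write `p (sin θ) = E[f(Z₁) g(Y)]` with `f = g = h(μ₀ + ψ₀ ·)` and
`Y = sin θ Z₁ + cos θ Z₂`, and differentiate in `θ` under the integral sign. With
`W = cos θ Z₁ - sin θ Z₂` the derivative is `E[f(Z₁) g'(Y) W]`, and `(Y, W)` is again a
standard normal pair with `Z₁ = sin θ Y + cos θ W`.
Since `W` is centred and independent of `Y`, subtracting `E[f(sin θ Y) g'(Y) W] = 0` leaves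
`E[(f(sin θ Y + cos θ W) - f(sin θ Y)) g'(Y) W]`, whose integrand is positive wherever
`W ≠ 0` because `f` is strictly increasing and `cos θ > 0`.
-/

open ProbabilityTheory MeasureTheory Real Set
open scoped ENNReal NNReal

local notation "𝒩₂" => Measure.prod (gaussianReal 0 1) (gaussianReal 0 1)

lemma exp_div_one_add_exp_eq_sigmoid (x : ℝ) : exp x / (1 + exp x) = sigmoid x := by
  rw [sigmoid_def, exp_neg]
  field_simp
  ring

lemma le_sigmoid_iff {s x : ℝ} (hs : 0 < s) : s ≤ sigmoid x ↔ s < 1 ∧ log (s / (1 - s)) ≤ x := by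
  by_cases hs1 : s < 1
  · have hσ : sigmoid (log (s / (1 - s))) = s := by
      rw [sigmoid_def, exp_neg, exp_log (div_pos hs (by linarith))]
      field_simp
      ring
    rw [← sigmoid_le_iff (a := log (s / (1 - s))) (b := x), hσ]
    exact (and_iff_right hs1).symm
  · exact iff_of_false (fun h => hs1 (h.trans_lt (sigmoid_lt_one x))) (fun h => hs1 h.1)

section LayerCake

variable {α : Type*} [MeasurableSpace α] {μ : Measure α} {u v : α → ℝ}

theorem lintegral_mul_eq_lintegral_lintegral_meas_le (hu0 : 0 ≤ u) (hv0 : 0 ≤ v)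
    (hu : Measurable u) (hv : Measurable v) :
    ∫⁻ z, ENNReal.ofReal (u z * v z) ∂μ
      = ∫⁻ s in Ioi 0, ∫⁻ t in Ioi 0, μ {z | s ≤ u z ∧ t ≤ v z} := by
  calc ∫⁻ z, ENNReal.ofReal (u z * v z) ∂μ
      = ∫⁻ z, ENNReal.ofReal (u z) ∂μ.withDensity fun z => ENNReal.ofReal (v z) := by
        rw [lintegral_withDensity_eq_lintegral_mul _ (by fun_prop) (by fun_prop)]
        refine lintegral_congr fun z => ?_
        rw [Pi.mul_apply, ← ENNReal.ofReal_mul (hv0 z), mul_comm]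
    _ = ∫⁻ s in Ioi 0, ∫⁻ z in {z | s ≤ u z}, ENNReal.ofReal (v z) ∂μ := by
        rw [lintegral_eq_lintegral_meas_le _ (ae_of_all _ hu0) hu.aemeasurable]
        exact lintegral_congr fun s => withDensity_apply _ (measurableSet_le measurable_const hu)
    _ = ∫⁻ s in Ioi 0, ∫⁻ t in Ioi 0, μ {z | s ≤ u z ∧ t ≤ v z} := by
        refine lintegral_congr fun s => ?_
        rw [lintegral_eq_lintegral_meas_le _ (ae_of_all _ hv0) hv.aemeasurable]
        refine lintegral_congr fun t => ?_
        rw [Measure.restrict_apply (measurableSet_le measurable_const hv), inter_comm]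
        rfl

theorem integral_mul_eq_integral_integral_measureReal_le [IsFiniteMeasure μ] (hu0 : 0 ≤ u)
    (hv0 : 0 ≤ v) (hu : Measurable u) (hv : Measurable v)
    (huv : Integrable (fun z => u z * v z) μ) :
    ∫ z, u z * v z ∂μ = ∫ s in Ioi 0, ∫ t in Ioi 0, μ.real {z | s ≤ u z ∧ t ≤ v z} := by
  set F : ℝ → ℝ≥0∞ := fun s => ∫⁻ t in Ioi 0, μ {z | s ≤ u z ∧ t ≤ v z}
  have hF : Antitone F := fun s s' hss' =>
    lintegral_mono fun t => measure_mono fun z hz => ⟨hss'.trans hz.1, hz.2⟩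
  have hanti : ∀ s, Antitone fun t => μ {z | s ≤ u z ∧ t ≤ v z} := fun s t t' htt' =>
    measure_mono fun z hz => ⟨hz.1, htt'.trans hz.2⟩
  have hF_lt_top : ∫⁻ s in Ioi 0, F s ≠ ∞ := by
    rw [← lintegral_mul_eq_lintegral_lintegral_meas_le hu0 hv0 hu hv]
    exact huv.lintegral_lt_top.ne
  calc ∫ z, u z * v z ∂μ = (∫⁻ s in Ioi 0, F s).toReal := by
        rw [integral_eq_lintegral_of_nonneg_ae (ae_of_all _ fun z => mul_nonneg (hu0 z) (hv0 z))
          huv.aestronglyMeasurable, lintegral_mul_eq_lintegral_lintegral_meas_le hu0 hv0 hu hv]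
    _ = ∫ s in Ioi 0, (F s).toReal :=
        (integral_toReal hF.measurable.aemeasurable (ae_lt_top hF.measurable hF_lt_top)).symm
    _ = ∫ s in Ioi 0, ∫ t in Ioi 0, μ.real {z | s ≤ u z ∧ t ≤ v z} :=
        integral_congr_ae (ae_of_all _ fun s => (integral_toReal (hanti s).measurable.aemeasurable
          (ae_of_all _ fun _ => measure_lt_top _ _)).symm)

theorem integral_sigmoid_mul_sigmoid [IsFiniteMeasure μ] {x y : α → ℝ} (hx : Measurable x)
    (hy : Measurable y) :
    ∫ z, sigmoid (x z) * sigmoid (y z) ∂μ = ∫ s in Ioi 0, ∫ t in Ioi 0,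
      if s < 1 ∧ t < 1 then μ.real {z | log (s / (1 - s)) ≤ x z ∧ log (t / (1 - t)) ≤ y z}
      else 0 := by
  have hbdd : Integrable (fun z => sigmoid (x z) * sigmoid (y z)) μ :=
    Integrable.of_bound (by fun_prop) 1 (ae_of_all _ fun z => by
      rw [norm_mul, Real.norm_of_nonneg (sigmoid_nonneg _), Real.norm_of_nonneg (sigmoid_nonneg _)]
      exact mul_le_one₀ (sigmoid_le_one _) (sigmoid_nonneg _) (sigmoid_le_one _))
  rw [integral_mul_eq_integral_integral_measureReal_le (fun z => sigmoid_nonneg _)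
    (fun z => sigmoid_nonneg _) (by fun_prop) (by fun_prop) hbdd]
  refine setIntegral_congr_fun measurableSet_Ioi fun s hs =>
    setIntegral_congr_fun measurableSet_Ioi fun t ht => ?_
  simp only [le_sigmoid_iff hs, le_sigmoid_iff ht]
  split_ifs with hst
  · simp only [hst, true_and]
  · convert measureReal_empty
    ext z
    simp only [mem_ofPred_eq, mem_empty_iff_false, iff_false]
    tauto

end LayerCake

lemma integral_pos_of_ae_pos {α : Type*} [MeasurableSpace α] {μ : Measure α} [NeZero μ]
    {f : α → ℝ} (hpos : ∀ᵐ x ∂μ, 0 < f x) (hf : Integrable f μ) : 0 < ∫ x, f x ∂μ := by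
  have hsupp : Function.support f =ᵐ[μ] univ :=
    ae_eq_univ.2 (ae_iff.1 (hpos.mono fun _ hx => hx.ne'))
  rw [integral_pos_iff_support_of_nonneg_ae (hpos.mono fun _ hx => hx.le) hf, measure_congr hsupp]
  exact Measure.measure_univ_pos.2 (NeZero.ne μ)

noncomputable def planeReflection (s c : ℝ) : ℝ × ℝ →L[ℝ] ℝ × ℝ :=
  (s • ContinuousLinearMap.fst ℝ ℝ ℝ + c • ContinuousLinearMap.snd ℝ ℝ ℝ).prod
    (c • ContinuousLinearMap.fst ℝ ℝ ℝ - s • ContinuousLinearMap.snd ℝ ℝ ℝ)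

@[simp] lemma planeReflection_apply (s c : ℝ) (z : ℝ × ℝ) :
    planeReflection s c z = (s * z.1 + c * z.2, c * z.1 - s * z.2) := rfl

lemma charFunDual_gaussianReal (m : ℝ) (v : ℝ≥0) (L : StrongDual ℝ ℝ) :
    charFunDual (gaussianReal m v) L = Complex.exp (L 1 * m * Complex.I - v * L 1 ^ 2 / 2) := by
  have hL : ⇑L = fun x => L 1 * x := funext fun x => by
    simpa [mul_comm] using L.map_smul x 1
  rw [charFunDual_eq_charFun_map_one, hL, gaussianReal_map_const_mul, charFun_gaussianReal]
  congr 1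
  push_cast
  ring

lemma map_planeReflection_gaussianReal_prod {s c : ℝ} (h : s ^ 2 + c ^ 2 = 1) :
    (𝒩₂).map (planeReflection s c) = 𝒩₂ := by
  refine Measure.ext_of_charFunDual (funext fun L => ?_)
  rw [charFunDual_map, charFunDual_prod, charFunDual_prod]
  simp only [charFunDual_gaussianReal, Complex.ofReal_zero, mul_zero, zero_mul, NNReal.coe_one,
    Complex.ofReal_one, one_mul, zero_sub, ← Complex.exp_add]
  congr 1
  simp only [ContinuousLinearMap.comp_apply, ContinuousLinearMap.inl_apply,
    ContinuousLinearMap.inr_apply, planeReflection_apply]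
  have hL : ∀ a b : ℝ, L (a, b) = a * L (1, 0) + b * L (0, 1) := fun a b => by
    rw [← smul_eq_mul, ← smul_eq_mul, ← map_smul, ← map_smul, ← map_add]
    simp
  rw [hL (s * 1 + c * 0), hL (s * 0 + c * 1)]
  have h' : (s : ℂ) ^ 2 + (c : ℂ) ^ 2 = 1 := by exact_mod_cast h
  push_cast
  linear_combination (-(L (1, 0) : ℂ) ^ 2 / 2 - (L (0, 1) : ℂ) ^ 2 / 2) * h'

lemma integral_comp_planeReflection {s c : ℝ} (h : s ^ 2 + c ^ 2 = 1) {F : ℝ × ℝ → ℝ}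
    (hF : AEStronglyMeasurable F 𝒩₂) :
    ∫ z, F (planeReflection s c z) ∂𝒩₂ = ∫ z, F z ∂𝒩₂ := by
  rw [← integral_map (planeReflection s c).continuous.aemeasurable
    (by rwa [map_planeReflection_gaussianReal_prod h]), map_planeReflection_gaussianReal_prod h]

lemma integrable_abs_gaussianReal (m : ℝ) (v : ℝ≥0) :
    Integrable (fun x : ℝ => |x|) (gaussianReal m v) :=
  ((memLp_id_gaussianReal 1).integrable le_rfl).abs

lemma ae_snd_ne_zero : ∀ᵐ z ∂𝒩₂, z.2 ≠ 0 :=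
  Measure.quasiMeasurePreserving_snd.ae
    ((gaussianReal_absolutelyContinuous 0 one_ne_zero).ae_le (Measure.ae_ne volume 0))

/-- `E[f X * g Y]` for a standard normal pair `(X, Y)` with correlation `sin θ`. -/
noncomputable def corrExpectation (f g : ℝ → ℝ) (θ : ℝ) : ℝ :=
  ∫ z, f z.1 * g (sin θ * z.1 + cos θ * z.2) ∂𝒩₂

noncomputable def corrExpectationDeriv (f g' : ℝ → ℝ) (θ : ℝ) : ℝ :=
  ∫ z, f z.1 * (g' (sin θ * z.1 + cos θ * z.2) * (cos θ * z.1 - sin θ * z.2)) ∂𝒩₂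

section CorrExpectation

variable {f g g' : ℝ → ℝ} {A B C : ℝ}

theorem hasDerivAt_corrExpectation (hf : Measurable f) (hfA : ∀ x, |f x| ≤ A)
    (hgC : ∀ x, |g x| ≤ C) (hg : ∀ x, HasDerivAt g (g' x) x) (hg' : Measurable g')
    (hg'B : ∀ x, |g' x| ≤ B) (θ : ℝ) :
    HasDerivAt (corrExpectation f g) (corrExpectationDeriv f g' θ) θ := by
  have hgm : Measurable g :=
    (continuous_iff_continuousAt.2 fun x => (hg x).continuousAt).measurable
  have hW : ∀ θ (z : ℝ × ℝ), |cos θ * z.1 - sin θ * z.2| ≤ |z.1| + |z.2| := fun θ z =>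
    calc |cos θ * z.1 - sin θ * z.2| ≤ |cos θ| * |z.1| + |sin θ| * |z.2| := by
          rw [← abs_mul, ← abs_mul]; exact abs_sub _ _
      _ ≤ 1 * |z.1| + 1 * |z.2| := by
          gcongr
          exacts [abs_cos_le_one θ, abs_sin_le_one θ]
      _ = |z.1| + |z.2| := by ring
  have hbound : Integrable (fun z : ℝ × ℝ => A * (B * (|z.1| + |z.2|))) 𝒩₂ :=
    (((integrable_abs_gaussianReal 0 1).comp_fst _).add
      ((integrable_abs_gaussianReal 0 1).comp_snd _)).const_mul B |>.const_mul A
  refine (hasDerivAt_integral_of_dominated_loc_of_deriv_le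
    (F := fun θ z => f z.1 * g (sin θ * z.1 + cos θ * z.2))
    (F' := fun θ z => f z.1 * (g' (sin θ * z.1 + cos θ * z.2) * (cos θ * z.1 - sin θ * z.2)))
    (Metric.ball_mem_nhds θ one_pos) (.of_forall fun θ => by fun_prop) ?_ (by fun_prop)
    (ae_of_all _ fun z θ _ => ?_) hbound (ae_of_all _ fun z θ _ => ?_)).2
  · refine Integrable.of_bound (by fun_prop) (A * C) (ae_of_all _ fun z => ?_)
    rw [norm_mul, Real.norm_eq_abs, Real.norm_eq_abs]
    exact mul_le_mul (hfA _) (hgC _) (abs_nonneg _) ((abs_nonneg _).trans (hfA 0))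
  · rw [norm_mul, norm_mul, Real.norm_eq_abs, Real.norm_eq_abs, Real.norm_eq_abs]
    exact mul_le_mul (hfA _) (mul_le_mul (hg'B _) (hW θ z) (abs_nonneg _)
      ((abs_nonneg _).trans (hg'B 0))) (by positivity) ((abs_nonneg _).trans (hfA 0))
  · have hY : HasDerivAt (fun θ => sin θ * z.1 + cos θ * z.2) (cos θ * z.1 - sin θ * z.2) θ := by
      refine (((hasDerivAt_sin θ).mul_const z.1).fun_add
        ((hasDerivAt_cos θ).mul_const z.2)).congr_deriv ?_
      ring
    exact ((hg _).comp θ hY).const_mul (f z.1)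

theorem corrExpectationDeriv_pos (hf : StrictMono f) (hfA : ∀ x, |f x| ≤ A) (hg' : Measurable g')
    (hg'pos : ∀ x, 0 < g' x) (hg'B : ∀ x, |g' x| ≤ B) {θ : ℝ}
    (hθ : θ ∈ Ioo (-(π / 2)) (π / 2)) : 0 < corrExpectationDeriv f g' θ := by
  set s := sin θ
  set c := cos θ
  have hc : 0 < c := cos_pos_of_mem_Ioo hθ
  have hsc : s ^ 2 + c ^ 2 = 1 := sin_sq_add_cos_sq θ
  have hfm : Measurable f := hf.monotone.measurable
  have hrefl : corrExpectationDeriv f g' θ = ∫ w, f (s * w.1 + c * w.2) * (g' w.1 * w.2) ∂𝒩₂ := by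
    rw [corrExpectationDeriv, ← integral_comp_planeReflection hsc
      (F := fun w => f (s * w.1 + c * w.2) * (g' w.1 * w.2)) (by fun_prop)]
    refine integral_congr_ae (ae_of_all _ fun z => ?_)
    simp only [planeReflection_apply]
    congr 2
    linear_combination -z.1 * hsc
  set G : ℝ × ℝ → ℝ := fun w => (f (s * w.1 + c * w.2) - f (s * w.1)) * (g' w.1 * w.2)
  set H : ℝ × ℝ → ℝ := fun w => f (s * w.1) * (g' w.1 * w.2)
  have hbound : Integrable (fun w : ℝ × ℝ => 2 * A * (B * |w.2|)) 𝒩₂ :=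
    ((integrable_abs_gaussianReal 0 1).comp_snd _).const_mul B |>.const_mul _
  have hG : Integrable G 𝒩₂ := by
    refine hbound.mono' (by fun_prop) (ae_of_all _ fun w => ?_)
    rw [norm_mul, norm_mul, Real.norm_eq_abs, Real.norm_eq_abs, Real.norm_eq_abs]
    have hdiff : |f (s * w.1 + c * w.2) - f (s * w.1)| ≤ 2 * A :=
      (abs_sub _ _).trans (by linarith [hfA (s * w.1 + c * w.2), hfA (s * w.1)])
    exact mul_le_mul hdiff (mul_le_mul_of_nonneg_right (hg'B _) (abs_nonneg _)) (by positivity)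
      (by linarith [(abs_nonneg _).trans (hfA 0)])
  have hH : Integrable H 𝒩₂ := by
    refine (hbound.const_mul 2⁻¹).mono' (by fun_prop) (ae_of_all _ fun w => ?_)
    rw [norm_mul, norm_mul, Real.norm_eq_abs, Real.norm_eq_abs, Real.norm_eq_abs]
    have := mul_le_mul (hfA (s * w.1)) (mul_le_mul_of_nonneg_right (hg'B w.1) (abs_nonneg w.2))
      (by positivity) ((abs_nonneg _).trans (hfA 0))
    linarith
  have hH0 : ∫ w, H w ∂𝒩₂ = 0 := by
    have := integral_prod_mul (μ := gaussianReal 0 1) (ν := gaussianReal 0 1)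
      (fun x => f (s * x) * g' x) id
    simp only [H, ← mul_assoc]
    simpa only [id, integral_id_gaussianReal, mul_zero] using this
  have hGpos : ∀ᵐ w ∂𝒩₂, 0 < G w := ae_snd_ne_zero.mono fun w hw => by
    rcases hw.lt_or_gt with hw | hw
    · refine mul_pos_of_neg_of_neg (sub_neg.2 (hf (by nlinarith))) ?_
      exact mul_neg_of_pos_of_neg (hg'pos _) hw
    · exact mul_pos (sub_pos.2 (hf (by nlinarith))) (mul_pos (hg'pos _) hw)
  calc 0 < ∫ w, G w ∂𝒩₂ := integral_pos_of_ae_pos hGpos hG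
    _ = ∫ w, G w ∂𝒩₂ + ∫ w, H w ∂𝒩₂ := by rw [hH0, add_zero]
    _ = corrExpectationDeriv f g' θ := by
        rw [hrefl, ← integral_add hG hH]
        exact integral_congr_ae (ae_of_all _ fun w => by simp only [G, H]; ring)

theorem strictMonoOn_corrExpectation (hf : StrictMono f) (hfA : ∀ x, |f x| ≤ A)
    (hgC : ∀ x, |g x| ≤ C) (hg : ∀ x, HasDerivAt g (g' x) x) (hg' : Measurable g')
    (hg'pos : ∀ x, 0 < g' x) (hg'B : ∀ x, |g' x| ≤ B) :
    StrictMonoOn (corrExpectation f g) (Ioo (-(π / 2)) (π / 2)) := by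
  have hD := hasDerivAt_corrExpectation hf.monotone.measurable hfA hgC hg hg' hg'B
  refine strictMonoOn_of_deriv_pos (convex_Ioo _ _)
    (fun θ _ => (hD θ).continuousAt.continuousWithinAt) fun θ hθ => ?_
  rw [(hD θ).deriv]
  exact corrExpectationDeriv_pos hf hfA hg' hg'pos hg'B (by rwa [interior_Ioo] at hθ)

end CorrExpectation

theorem strictMonoOn_corrExpectation_sigmoid (a : ℝ) {b : ℝ} (hb : 0 < b) :
    StrictMonoOn (corrExpectation (fun x => sigmoid (a + b * x)) (fun x => sigmoid (a + b * x)))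
      (Ioo (-(π / 2)) (π / 2)) := by
  have hσ : ∀ x, |sigmoid x| ≤ 1 := fun x =>
    abs_le.2 ⟨by linarith [sigmoid_nonneg x], sigmoid_le_one x⟩
  have hσ' : ∀ x, 0 < sigmoid x * (1 - sigmoid x) := fun x =>
    mul_pos (sigmoid_pos x) (sub_pos.2 (sigmoid_lt_one x))
  refine strictMonoOn_corrExpectation (A := 1) (B := b) (C := 1)
    (g' := fun x => sigmoid (a + b * x) * (1 - sigmoid (a + b * x)) * b)
    (sigmoid_strictMono.comp fun x y hxy => by gcongr) (fun x => hσ _) (fun x => hσ _)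
    (fun x => ?_) (by fun_prop) (fun x => mul_pos (hσ' _) hb) (fun x => ?_)
  · exact ((hasDerivAt_sigmoid _).comp x (((hasDerivAt_id x).const_mul b).const_add a)).congr_deriv
      (by simp)
  · rw [abs_of_pos (mul_pos (hσ' _) hb)]
    exact mul_le_of_le_one_left hb.le (mul_le_one₀ (sigmoid_le_one _)
      (sub_nonneg.2 (sigmoid_le_one _)) (by linarith [sigmoid_nonneg (a + b * x)]))

/-- For `(X,Y)` centered bivariate normal with common variance `ψ₀² > 0` and
correlation `γ ∈ (-1,1)` (realized as `X = ψ₀ Z₁`, `Y = ψ₀(γ Z₁ + √(1-γ²) Z₂)`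
with `Z₁, Z₂` i.i.d. standard normal), the quantity
`p_γ(1,1) = E[h(μ₀+X) h(μ₀+Y)]` (with `h` the logistic function) admits the
orthant-probability representation
`p_γ(1,1) = ∫₀^∞∫₀^∞ P_γ{X ≥ logit s - μ₀, Y ≥ logit t - μ₀} ds dt`
(with the integrand vanishing for `s ≥ 1` or `t ≥ 1`), and `p_γ(1,1)` is
strictly increasing in `γ` on `(-1,1)`. -/
theorem orthant_representation_and_strictMono
    (ψ0 μ0 : ℝ) (hψ0 : 0 < ψ0)
    (h : ℝ → ℝ) (hdef : ∀ x, h x = Real.exp x / (1 + Real.exp x))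
    (logit : ℝ → ℝ) (hlogit : ∀ s, logit s = Real.log (s / (1 - s)))
    (μ2 : Measure (ℝ × ℝ)) (hμ2 : μ2 = (gaussianReal 0 1).prod (gaussianReal 0 1))
    (p : ℝ → ℝ)
    (hp : ∀ γ : ℝ, p γ = ∫ z : ℝ × ℝ,
        h (μ0 + ψ0 * z.1) * h (μ0 + ψ0 * (γ * z.1 + Real.sqrt (1 - γ ^ 2) * z.2)) ∂μ2) :
    (∀ γ ∈ Ioo (-1:ℝ) 1, p γ =
      ∫ s in Ioi (0:ℝ), ∫ t in Ioi (0:ℝ),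
        (if s < 1 ∧ t < 1 then
          (μ2 {z : ℝ × ℝ | ψ0 * z.1 ≥ logit s - μ0 ∧
            ψ0 * (γ * z.1 + Real.sqrt (1 - γ ^ 2) * z.2) ≥ logit t - μ0}).toReal
         else 0)) ∧
    StrictMonoOn p (Ioo (-1:ℝ) 1) := by
  obtain rfl : h = sigmoid := funext fun x => (hdef x).trans (exp_div_one_add_exp_eq_sigmoid x)
  obtain rfl : logit = fun s => log (s / (1 - s)) := funext hlogit
  subst hμ2
  refine ⟨fun γ _ => ?_, ?_⟩
  · rw [hp, integral_sigmoid_mul_sigmoid (by fun_prop) (by fun_prop)]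
    simp_rw [ge_iff_le, sub_le_iff_le_add']
    rfl
  · have hp_arcsin : EqOn (corrExpectation (fun x => sigmoid (μ0 + ψ0 * x))
        (fun x => sigmoid (μ0 + ψ0 * x)) ∘ arcsin) p (Ioo (-1) 1) := fun γ hγ => by
      rw [hp, Function.comp_apply, corrExpectation, sin_arcsin hγ.1.le hγ.2.le, cos_arcsin]
    refine ((strictMonoOn_corrExpectation_sigmoid μ0 hψ0).comp
      (strictMonoOn_arcsin.mono Ioo_subset_Icc_self) fun γ hγ => ?_).congr hp_arcsin
    exact ⟨neg_pi_div_two_lt_arcsin.2 hγ.1, arcsin_lt_pi_div_two.2 hγ.2⟩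
end

section
/- Consider the mixed logistic model of the open problem: given i.i.d. random effects $u_1,\ldots,u_m \sim N(0,1)$ and $v_1,\ldots,v_n \sim N(0,1)$, mutually independent, binary responses $y_{ij}$, $1\le i\le m$, $1\le j\le n$, are conditionally independent with $\mathrm{logit}\,P(y_{ij}=1\mid u,v) = \mu + u_i + v_j$. Then as $m,n \to \infty$, there is, with probability tending to one, a root $\hat\mu$ of the likelihood equation such that $\hat\mu \to \mu$ in probability. -/
open ProbabilityTheory MeasureTheory Filter

/-- Marginal likelihood of the mixed logistic model of the open problem. -/
noncomputable def mixedLogisticLik (m n : ℕ) (μ : ℝ) (y : Fin m → Fin n → Bool) : ℝ :=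
  ∫ u : Fin m → ℝ, ∫ v : Fin n → ℝ,
    (∏ i, ∏ j,
      (if y i j then Real.exp (μ + u i + v j) / (1 + Real.exp (μ + u i + v j))
       else 1 - Real.exp (μ + u i + v j) / (1 + Real.exp (μ + u i + v j))))
    ∂(Measure.pi fun _ : Fin n => gaussianReal 0 1)
    ∂(Measure.pi fun _ : Fin m => gaussianReal 0 1)

/-!
If the likelihood at `μ` exceeds the likelihood at `μ - ε` and at `μ + ε`, the
log-likelihood has an interior local maximum, i.e. a root of the likelihood equation, within
`ε` of `μ`. So it suffices that `P_μ(L_μ ≤ L_t) → 0` for `t ≠ μ`. This probability is at most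
the Bhattacharyya coefficient `∑_y √(L_μ(y) L_t(y))`, which can only grow when the data are
reduced to the diagonal `(y_ii)_{i ≤ min m n}` (Cauchy–Schwarz on each fibre). The diagonal
entries involve disjoint random effects, hence are i.i.d. Bernoulli with a success probability
strictly increasing in the parameter, so the coefficient of the diagonal laws is
`ρ ^ min m n` with `ρ < 1`.
-/

open Finset Function Real Topology

section Bhattacharyya

variable {α : Type*} [Fintype α]

noncomputable def bhattacharyya (p q : α → ℝ) : ℝ := ∑ a, √(p a) * √(q a)

theorem bhattacharyya_nonneg (p q : α → ℝ) : 0 ≤ bhattacharyya p q :=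
  sum_nonneg fun _ _ => by positivity

theorem sum_filter_le_le_bhattacharyya (p q : α → ℝ) (hp : ∀ a, 0 ≤ p a) :
    ∑ a with p a ≤ q a, p a ≤ bhattacharyya p q := by
  calc ∑ a with p a ≤ q a, p a
      ≤ ∑ a with p a ≤ q a, √(p a) * √(q a) := by
        refine sum_le_sum fun a ha => ?_
        calc p a = √(p a) * √(p a) := (mul_self_sqrt (hp a)).symm
          _ ≤ √(p a) * √(q a) := by gcongr; exact (mem_filter.1 ha).2
    _ ≤ bhattacharyya p q :=
        sum_le_sum_of_subset_of_nonneg (filter_subset _ _) fun a _ _ => by positivity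

theorem bhattacharyya_le_map {β : Type*} [Fintype β] [DecidableEq β] (f : α → β)
    {p q : α → ℝ} (hp : ∀ a, 0 ≤ p a) (hq : ∀ a, 0 ≤ q a) :
    bhattacharyya p q ≤
      bhattacharyya (fun b => ∑ a with f a = b, p a) (fun b => ∑ a with f a = b, q a) := by
  rw [bhattacharyya, ← sum_fiberwise univ f]
  exact sum_le_sum fun b _ => sum_sqrt_mul_sqrt_le _ hp hq

theorem bhattacharyya_pi {ι : Type*} [Fintype ι] [DecidableEq ι] {p q : ι → α → ℝ}
    (hp : ∀ i a, 0 ≤ p i a) (hq : ∀ i a, 0 ≤ q i a) :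
    bhattacharyya (fun x : ι → α => ∏ i, p i (x i)) (fun x => ∏ i, q i (x i))
      = ∏ i, bhattacharyya (p i) (q i) := by
  simp only [bhattacharyya, sqrt_prod _ fun i _ => hp i _, sqrt_prod _ fun i _ => hq i _,
    ← prod_mul_distrib, Fintype.prod_sum]

theorem bhattacharyya_lt_one {p q : α → ℝ} (hp : ∀ a, 0 ≤ p a) (hq : ∀ a, 0 ≤ q a)
    (hp1 : ∑ a, p a = 1) (hq1 : ∑ a, q a = 1) (hpq : p ≠ q) : bhattacharyya p q < 1 := by
  obtain ⟨a, ha⟩ := Function.ne_iff.1 hpq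
  have hsq : ∑ a, (√(p a) - √(q a)) ^ 2 = 2 - 2 * bhattacharyya p q := by
    simp only [sub_sq, sq_sqrt (hp _), sq_sqrt (hq _), sum_add_distrib, sum_sub_distrib,
      hp1, hq1, bhattacharyya, mul_sum]
    ring_nf
  have hne : √(p a) ≠ √(q a) := fun h => ha ((sqrt_inj (hp a) (hq a)).1 h)
  have hpos : 0 < ∑ a, (√(p a) - √(q a)) ^ 2 :=
    sum_pos' (fun _ _ => sq_nonneg _)
      ⟨a, mem_univ a, pow_two_pos_of_ne_zero (sub_ne_zero.2 hne)⟩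
  linarith

end Bhattacharyya

theorem sum_comp_eq_prod_of_sum_eq_one {ι κ β R : Type*} [Fintype ι] [Fintype κ]
    [DecidableEq κ] [Fintype β] [DecidableEq β] [CommSemiring R] {e : ι → κ}
    (he : Injective e) (W : κ → β → R) (hW : ∀ k, ∑ b, W k b = 1) (d : ι → β) :
    ∑ y : κ → β with y ∘ e = d, ∏ k, W k (y k) = ∏ i, W (e i) (d i) := by
  -- `y ∘ e = d` pins the coordinates in the range of `e` and leaves the others free.
  set S : κ → Finset β := extend e (fun i => {d i}) fun _ => univ
  have hS : ({y : κ → β | y ∘ e = d} : Finset (κ → β)) = Fintype.piFinset S := by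
    ext y
    simp only [mem_filter, mem_univ, true_and, Fintype.mem_piFinset, funext_iff, comp_apply]
    constructor
    · intro hy k
      by_cases hk : ∃ i, e i = k
      · obtain ⟨i, rfl⟩ := hk
        simp [S, he.extend_apply, hy i]
      · simp [S, extend_apply' _ _ _ hk]
    · intro hy i
      simpa [S, he.extend_apply] using hy (e i)
  rw [hS, ← prod_univ_sum]
  refine (Fintype.prod_of_injective e he _ _ (fun k hk => ?_) fun i => ?_).symm
  · simp [S, extend_apply' _ _ _ hk, hW]
  · simp [S, he.extend_apply]

theorem integral_prod_comp_of_injective {ι κ E : Type*} [Fintype ι] [Fintype κ]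
    [MeasurableSpace E] (μ : κ → Measure E) [∀ k, IsProbabilityMeasure (μ k)]
    {e : ι → κ} (he : Injective e) (f : ι → E → ℝ) :
    ∫ x, ∏ i, f i (x (e i)) ∂Measure.pi μ = ∏ i, ∫ a, f i a ∂μ (e i) := by
  classical
  set g : κ → E → ℝ := extend e f fun _ _ => 1
  have hg : ∀ k ∉ Set.range e, g k = fun _ => 1 := fun k hk => extend_apply' _ _ _ hk
  have hfg : ∀ i, f i = g (e i) := fun i => (he.extend_apply _ _ i).symm
  calc ∫ x, ∏ i, f i (x (e i)) ∂Measure.pi μ = ∫ x, ∏ k, g k (x k) ∂Measure.pi μ := by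
        congr 1 with x
        exact Fintype.prod_of_injective e he _ _ (fun k hk => by simp [hg k hk])
          fun i => by rw [hfg]
    _ = ∏ k, ∫ a, g k a ∂μ k := integral_fintype_prod_eq_prod g
    _ = ∏ i, ∫ a, f i a ∂μ (e i) :=
        (Fintype.prod_of_injective e he _ _ (fun k hk => by simp [hg k hk])
          fun i => by rw [hfg]).symm

theorem integral_lt_integral_of_forall_lt {X : Type*} [MeasurableSpace X] {μ : Measure X}
    [NeZero μ] {f g : X → ℝ} (hf : Integrable f μ) (hg : Integrable g μ)
    (hfg : ∀ x, f x < g x) : ∫ x, f x ∂μ < ∫ x, g x ∂μ := by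
  rw [← sub_pos, ← integral_sub hg hf, integral_pos_iff_support_of_nonneg
    (fun x => (sub_pos.2 (hfg x)).le) (hg.sub hf)]
  have hsupp : Function.support (fun x => g x - f x) = Set.univ :=
    Set.eq_univ_of_forall fun x => (sub_pos.2 (hfg x)).ne'
  simpa [hsupp] using NeZero.ne μ

theorem ofReal_one_sub_le_measure_of_compl_subset {Ω : Type*} [MeasurableSpace Ω]
    {P : Measure Ω} [IsProbabilityMeasure P] {A B : Set Ω} {δ : ℝ} (hδ : 0 ≤ δ)
    (hAB : Aᶜ ⊆ B) (hB : P B ≤ ENNReal.ofReal δ) : ENNReal.ofReal (1 - δ) ≤ P A := by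
  rw [ENNReal.ofReal_sub _ hδ, ENNReal.ofReal_one, tsub_le_iff_right]
  calc 1 = P (A ∪ Aᶜ) := by rw [Set.union_compl_self, measure_univ]
    _ ≤ P A + P B := (measure_union_le _ _).trans (add_le_add_right (measure_mono hAB) _)
    _ ≤ P A + ENNReal.ofReal δ := add_le_add_right hB _

theorem exists_mem_Ioo_isLocalMax_of_lt {X Y : Type*} [ConditionallyCompleteLinearOrder X]
    [TopologicalSpace X] [OrderTopology X] [LinearOrder Y]
    [TopologicalSpace Y] [OrderTopology Y] {f : X → Y} {a b c : X}
    (hc : c ∈ Set.Icc a b) (hf : ContinuousOn f (Set.Icc a b)) (ha : f a < f c)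
    (hb : f b < f c) : ∃ x ∈ Set.Ioo a b, IsLocalMax f x := by
  obtain ⟨x, hx, hmax⟩ := isCompact_Icc.exists_isMaxOn ⟨c, hc⟩ hf
  have hxa : a ≠ x := by rintro rfl; exact (ha.trans_le (hmax hc)).false
  have hxb : x ≠ b := by rintro rfl; exact (hb.trans_le (hmax hc)).false
  have hx' : x ∈ Set.Ioo a b := ⟨hx.1.lt_of_ne hxa, hx.2.lt_of_ne hxb⟩
  exact ⟨x, hx', hmax.isLocalMax (Icc_mem_nhds hx'.1 hx'.2)⟩

namespace MixedLogistic

local notation "γ" => gaussianReal 0 1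

noncomputable def weight (b : Bool) (x : ℝ) : ℝ := if b then sigmoid x else 1 - sigmoid x

theorem weight_pos (b : Bool) (x : ℝ) : 0 < weight b x := by
  cases b <;> simp [weight, sigmoid_pos, sigmoid_lt_one]

theorem norm_weight_le_one (b : Bool) (x : ℝ) : ‖weight b x‖ ≤ 1 := by
  rw [norm_of_nonneg (weight_pos b x).le]
  cases b <;> simp [weight, sigmoid_nonneg, sigmoid_le_one]

@[fun_prop]
theorem continuous_weight (b : Bool) : Continuous (weight b) := by
  cases b
  · exact continuous_const.sub continuous_sigmoid
  · exact continuous_sigmoid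

theorem sum_weight (x : ℝ) : ∑ b, weight b x = 1 := by
  simp [weight]

theorem norm_prod_weight_le_one {ι : Type*} (s : Finset ι) (b : ι → Bool) (x : ι → ℝ) :
    ‖∏ i ∈ s, weight (b i) (x i)‖ ≤ 1 := by
  rw [norm_prod]
  exact prod_le_one (fun _ _ => norm_nonneg _) fun i _ => norm_weight_le_one _ _

noncomputable abbrev effectsLaw (m n : ℕ) : Measure ((Fin m → ℝ) × (Fin n → ℝ)) :=
  (Measure.pi fun _ => γ).prod (Measure.pi fun _ => γ)

noncomputable def condLik {m n : ℕ} (t : ℝ) (y : Fin m → Fin n → Bool)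
    (p : (Fin m → ℝ) × (Fin n → ℝ)) : ℝ :=
  ∏ k : Fin m × Fin n, weight (y k.1 k.2) (t + p.1 k.1 + p.2 k.2)

variable {m n : ℕ}

theorem condLik_pos (t : ℝ) (y : Fin m → Fin n → Bool) (p : (Fin m → ℝ) × (Fin n → ℝ)) :
    0 < condLik t y p :=
  prod_pos fun _ _ => weight_pos _ _

theorem integrable_condLik (t : ℝ) (y : Fin m → Fin n → Bool) :
    Integrable (condLik t y) (effectsLaw m n) :=
  .of_bound (by unfold condLik; fun_prop) 1 (ae_of_all _ fun _ => norm_prod_weight_le_one _ _ _)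

theorem mixedLogisticLik_eq_integral (t : ℝ) (y : Fin m → Fin n → Bool) :
    mixedLogisticLik m n t y = ∫ p, condLik t y p ∂effectsLaw m n := by
  have hsigmoid : ∀ x, exp x / (1 + exp x) = sigmoid x := fun x => by
    rw [sigmoid_def, exp_neg]; field_simp; ring
  rw [integral_prod _ (integrable_condLik t y)]
  simp only [mixedLogisticLik, condLik, Fintype.prod_prod_type, weight, hsigmoid]

theorem mixedLogisticLik_pos (t : ℝ) (y : Fin m → Fin n → Bool) :
    0 < mixedLogisticLik m n t y := by
  rw [mixedLogisticLik_eq_integral]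
  simpa using integral_lt_integral_of_forall_lt (integrable_zero _ _ _)
    (integrable_condLik t y) (condLik_pos t y)

theorem continuous_mixedLogisticLik (y : Fin m → Fin n → Bool) :
    Continuous fun t => mixedLogisticLik m n t y := by
  simp only [mixedLogisticLik_eq_integral]
  exact continuous_of_dominated (fun t => (integrable_condLik t y).aestronglyMeasurable)
    (fun t => ae_of_all _ fun _ => norm_prod_weight_le_one _ _ _) (integrable_const 1)
    (ae_of_all _ fun p => by unfold condLik; fun_prop)

def diagEmbedding (m n : ℕ) (i : Fin (min m n)) : Fin m × Fin n :=
  (Fin.castLE (min_le_left m n) i, Fin.castLE (min_le_right m n) i)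

theorem diagEmbedding_injective (m n : ℕ) : Injective (diagEmbedding m n) :=
  fun _ _ h => Fin.castLE_injective (min_le_left m n) (congrArg Prod.fst h)

def diag (y : Fin m → Fin n → Bool) (i : Fin (min m n)) : Bool :=
  uncurry y (diagEmbedding m n i)

theorem sum_condLik_diag_eq (t : ℝ) (p : (Fin m → ℝ) × (Fin n → ℝ))
    (d : Fin (min m n) → Bool) :
    ∑ y with diag y = d, condLik t y p
      = ∏ i, weight (d i) (t + p.1 (diagEmbedding m n i).1 + p.2 (diagEmbedding m n i).2) := by
  rw [sum_filter, ← (Equiv.curry _ _ _).sum_comp, ← sum_filter]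
  exact sum_comp_eq_prod_of_sum_eq_one (diagEmbedding_injective m n)
    (fun k b => weight b (t + p.1 k.1 + p.2 k.2)) (fun _ => sum_weight _) d

noncomputable def diagProb (t : ℝ) (b : Bool) : ℝ :=
  ∫ p, weight b (t + p.1 + p.2) ∂Measure.prod γ γ

theorem integrable_weight_add (t : ℝ) (b : Bool) :
    Integrable (fun p : ℝ × ℝ => weight b (t + p.1 + p.2)) (Measure.prod γ γ) :=
  .of_bound (by fun_prop) 1 (ae_of_all _ fun _ => norm_weight_le_one _ _)

theorem integral_prod_weight_diag (t : ℝ) (d : Fin (min m n) → Bool) :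
    ∫ p, ∏ i, weight (d i) (t + p.1 (diagEmbedding m n i).1 + p.2 (diagEmbedding m n i).2)
        ∂effectsLaw m n = ∏ i, diagProb t (d i) := by
  have hint : Integrable (fun p : (Fin m → ℝ) × (Fin n → ℝ) =>
      ∏ i, weight (d i) (t + p.1 (diagEmbedding m n i).1 + p.2 (diagEmbedding m n i).2))
      (effectsLaw m n) :=
    .of_bound (by fun_prop) 1 (ae_of_all _ fun _ => norm_prod_weight_le_one _ _ _)
  set e₁ : Fin (min m n) → Fin m := Fin.castLE (min_le_left m n)
  set e₂ : Fin (min m n) → Fin n := Fin.castLE (min_le_right m n)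
  calc ∫ p, ∏ i, weight (d i) (t + p.1 (diagEmbedding m n i).1 + p.2 (diagEmbedding m n i).2)
          ∂effectsLaw m n
      = ∫ u, ∫ v, ∏ i, weight (d i) (t + u (e₁ i) + v (e₂ i))
          ∂Measure.pi (fun _ => γ) ∂Measure.pi (fun _ => γ) :=
        integral_prod _ hint
    _ = ∫ u, ∏ i, ∫ z, weight (d i) (t + u (e₁ i) + z) ∂γ
          ∂Measure.pi (fun _ => γ) := by
        congr 1 with u
        exact integral_prod_comp_of_injective _ (Fin.castLE_injective _)
          fun i z => weight (d i) (t + u (e₁ i) + z)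
    _ = ∏ i, ∫ a, ∫ z, weight (d i) (t + a + z) ∂γ ∂γ :=
        integral_prod_comp_of_injective _ (Fin.castLE_injective _)
          fun i a => ∫ z, weight (d i) (t + a + z) ∂γ
    _ = ∏ i, diagProb t (d i) := by
        congr 1 with i
        exact (integral_prod _ (integrable_weight_add t (d i))).symm

theorem sum_mixedLogisticLik_diag_eq (t : ℝ) (d : Fin (min m n) → Bool) :
    ∑ y with diag y = d, mixedLogisticLik m n t y = ∏ i, diagProb t (d i) := by
  simp only [mixedLogisticLik_eq_integral]
  rw [← integral_finsetSum _ fun y _ => integrable_condLik t y]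
  simp only [sum_condLik_diag_eq]
  exact integral_prod_weight_diag t d

theorem diagProb_nonneg (t : ℝ) (b : Bool) : 0 ≤ diagProb t b :=
  integral_nonneg fun _ => (weight_pos _ _).le

theorem sum_diagProb (t : ℝ) : ∑ b, diagProb t b = 1 := by
  simp only [diagProb]
  rw [← integral_finsetSum _ fun b _ => integrable_weight_add t b]
  simp only [sum_weight, integral_const, probReal_univ, smul_eq_mul, mul_one]

theorem strictMono_diagProb_true : StrictMono fun t => diagProb t true := fun s t hst =>
  integral_lt_integral_of_forall_lt (integrable_weight_add s true) (integrable_weight_add t true)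
    fun p => sigmoid_lt (by linarith)

theorem bhattacharyya_diagProb_lt_one {s t : ℝ} (hst : s ≠ t) :
    bhattacharyya (diagProb s) (diagProb t) < 1 :=
  bhattacharyya_lt_one (diagProb_nonneg s) (diagProb_nonneg t) (sum_diagProb s) (sum_diagProb t)
    fun h => hst (strictMono_diagProb_true.injective (congrFun h true))

theorem bhattacharyya_mixedLogisticLik_le (s t : ℝ) :
    bhattacharyya (mixedLogisticLik m n s) (mixedLogisticLik m n t)
      ≤ bhattacharyya (diagProb s) (diagProb t) ^ min m n := by
  calc bhattacharyya (mixedLogisticLik m n s) (mixedLogisticLik m n t)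
      ≤ bhattacharyya (fun d => ∑ y with diag y = d, mixedLogisticLik m n s y)
          (fun d => ∑ y with diag y = d, mixedLogisticLik m n t y) :=
        bhattacharyya_le_map diag (fun y => (mixedLogisticLik_pos s y).le)
          (fun y => (mixedLogisticLik_pos t y).le)
    _ = ∏ _i : Fin (min m n), bhattacharyya (diagProb s) (diagProb t) := by
        simp only [sum_mixedLogisticLik_diag_eq]
        exact bhattacharyya_pi (fun _ => diagProb_nonneg s) (fun _ => diagProb_nonneg t)
    _ = bhattacharyya (diagProb s) (diagProb t) ^ min m n := by simp

theorem measure_mixedLogisticLik_le_le {Ω : Type*} [MeasurableSpace Ω] (P : Measure Ω) {μ : ℝ}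
    {Y : Ω → Fin m → Fin n → Bool} (hY : Measurable Y)
    (hdist : ∀ y, P {ω | Y ω = y} = ENNReal.ofReal (mixedLogisticLik m n μ y)) (t : ℝ) :
    P {ω | mixedLogisticLik m n μ (Y ω) ≤ mixedLogisticLik m n t (Y ω)}
      ≤ ENNReal.ofReal (bhattacharyya (diagProb μ) (diagProb t) ^ min m n) := by
  have hpos : ∀ y, 0 ≤ mixedLogisticLik m n μ y := fun y => (mixedLogisticLik_pos μ y).le
  have hset : {ω | mixedLogisticLik m n μ (Y ω) ≤ mixedLogisticLik m n t (Y ω)}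
      = Y ⁻¹' ↑({y | mixedLogisticLik m n μ y ≤ mixedLogisticLik m n t y} : Finset _) := by
    ext; simp
  rw [hset, ← sum_measure_preimage_singleton _ fun y _ => hY (measurableSet_singleton y)]
  simp only [Set.preimage, Set.mem_singleton_iff, hdist]
  rw [← ENNReal.ofReal_sum_of_nonneg fun y _ => hpos y]
  exact ENNReal.ofReal_le_ofReal <| (sum_filter_le_le_bhattacharyya _ _ hpos).trans
    (bhattacharyya_mixedLogisticLik_le μ t)

theorem exists_deriv_log_mixedLogisticLik_eq_zero {μ r : ℝ} (hr : 0 ≤ r)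
    (y : Fin m → Fin n → Bool)
    (h₁ : mixedLogisticLik m n (μ - r) y < mixedLogisticLik m n μ y)
    (h₂ : mixedLogisticLik m n (μ + r) y < mixedLogisticLik m n μ y) :
    ∃ x, |x - μ| < r ∧ deriv (fun t => log (mixedLogisticLik m n t y)) x = 0 := by
  have hcont : Continuous fun t => log (mixedLogisticLik m n t y) :=
    (continuous_mixedLogisticLik y).log fun t => (mixedLogisticLik_pos t y).ne'
  obtain ⟨x, hx, hmax⟩ := exists_mem_Ioo_isLocalMax_of_lt
    (⟨by linarith, by linarith⟩ : μ ∈ Set.Icc (μ - r) (μ + r)) hcont.continuousOn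
    (log_lt_log (mixedLogisticLik_pos _ y) h₁) (log_lt_log (mixedLogisticLik_pos _ y) h₂)
  exact ⟨x, abs_sub_lt_iff.2 ⟨by linarith [hx.2], by linarith [hx.1]⟩, hmax.deriv_eq_zero⟩

end MixedLogistic

open MixedLogistic

/-- Cramér consistency in the open problem (Theorem 1): if the data `Y^{(m,n)}`
are distributed according to the mixed logistic model with crossed standard
normal random effects and true parameter `μ`, then, with probability tending to
one as `m, n → ∞`, the likelihood equation has a root within any prescribed
distance of `μ`. -/
theorem cramer_consistency_open_problem
    {Ω : Type*} [MeasurableSpace Ω] (P : Measure Ω) [IsProbabilityMeasure P]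
    (μ : ℝ) (Y : (m n : ℕ) → Ω → (Fin m → Fin n → Bool))
    (hmeas : ∀ m n, Measurable (Y m n))
    (hdist : ∀ m n (yv : Fin m → Fin n → Bool),
      P {ω | Y m n ω = yv} = ENNReal.ofReal (mixedLogisticLik m n μ yv)) :
    ∀ ε > (0:ℝ), ∀ δ > (0:ℝ), ∃ N : ℕ, ∀ m ≥ N, ∀ n ≥ N,
      P {ω | ∃ r : ℝ, |r - μ| < ε ∧
          deriv (fun t => Real.log (mixedLogisticLik m n t (Y m n ω))) r = 0}
        ≥ ENNReal.ofReal (1 - δ) := by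
  intro ε hε δ hδ
  set ρ : ℝ → ℝ := fun t => bhattacharyya (diagProb μ) (diagProb t)
  have hρ : ∀ t ≠ μ, Tendsto (fun k : ℕ => ρ t ^ k) atTop (𝓝 0) := fun t ht =>
    tendsto_pow_atTop_nhds_zero_of_lt_one (bhattacharyya_nonneg _ _)
      (bhattacharyya_diagProb_lt_one ht.symm)
  have hlim : Tendsto (fun k => ρ (μ - ε) ^ k + ρ (μ + ε) ^ k) atTop (𝓝 0) := by
    simpa using (hρ (μ - ε) (by linarith)).add (hρ (μ + ε) (by linarith))
  obtain ⟨N, hN⟩ := eventually_atTop.1 (hlim.eventually_lt_const hδ)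
  refine ⟨N, fun m hm n hn => ?_⟩
  set bad : ℝ → Set Ω := fun t =>
    {ω | mixedLogisticLik m n μ (Y m n ω) ≤ mixedLogisticLik m n t (Y m n ω)}
  refine ofReal_one_sub_le_measure_of_compl_subset hδ.le (B := bad (μ - ε) ∪ bad (μ + ε))
    (fun ω hω => ?_) ?_
  · by_contra h
    simp only [Set.mem_union, not_or, bad, Set.mem_ofPred_eq, not_le] at h
    exact hω (exists_deriv_log_mixedLogisticLik_eq_zero hε.le _ h.1 h.2)
  calc P (bad (μ - ε) ∪ bad (μ + ε)) ≤ P (bad (μ - ε)) + P (bad (μ + ε)) :=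
        measure_union_le _ _
    _ ≤ ENNReal.ofReal (ρ (μ - ε) ^ min m n) + ENNReal.ofReal (ρ (μ + ε) ^ min m n) :=
      add_le_add (measure_mixedLogisticLik_le_le P (hmeas m n) (hdist m n) _)
        (measure_mixedLogisticLik_le_le P (hmeas m n) (hdist m n) _)
    _ ≤ ENNReal.ofReal δ := by
      rw [← ENNReal.ofReal_add (pow_nonneg (bhattacharyya_nonneg _ _) _)
        (pow_nonneg (bhattacharyya_nonneg _ _) _)]
      exact ENNReal.ofReal_le_ofReal (hN _ (le_min hm hn)).le
end
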